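/- arXiv:2504.08639 — 2 statements merged into one kernel-verified Lean document; each statement's English description precedes it below -/
import Mathlib

section
/- For any labelled Markov chain (X,L,τ,l), any natural number i, and any states x,y ∈ X, the judgment x ⊢_{Γ^i(⊥)(x,y)} y is derivable in the derivation system (in particular Γ^i(⊥)(x,y) is rational). -/
/-- A finitely supported, rational-valued probability distribution on `X`. -/
structure FinDist (X : Type*) where
  p : X → ℝ
  nonneg : ∀ x, 0 ≤ p x
  rat : ∀ x, ∃ q : ℚ, (q : ℝ) = p x
  supp : Finset X
  mem_supp : ∀ x, x ∈ supp ↔ p x ≠ 0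
  sum_one : ∑ x ∈ supp, p x = 1

/-- A labelled Markov chain with states `X` and labels `L`. -/
structure LMC (X : Type*) (L : Type*) where
  τ : X → FinDist X
  label : X → L

/-- Expectation `μ ⊨ h = ∑ x, μ(x)·h(x)`. -/
noncomputable def expv {X : Type*} (μ : FinDist X) (h : X → ℝ) : ℝ :=
  ∑ z ∈ μ.supp, μ.p z * h z

/-- A `[0,1]`-valued pseudometric on `X`. -/
structure PMet (X : Type*) where
  d : X → X → ℝ
  nonneg : ∀ x y, 0 ≤ d x y
  le_one : ∀ x y, d x y ≤ 1
  refl : ∀ x, d x x = 0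
  symm : ∀ x y, d x y = d y x
  triangle : ∀ x y z, d x z ≤ d x y + d y z

open Classical in
/-- The functional `Γ` (on underlying distance functions). -/
noncomputable def GammaFun {X L : Type*} (M : LMC X L) (d : X → X → ℝ) : X → X → ℝ :=
  fun x y =>
    if M.label x ≠ M.label y then 1
    else sSup { r : ℝ | ∃ h : X → ℝ, (∀ z, h z ∈ Set.Icc (0:ℝ) 1) ∧
      (∀ u v, |h u - h v| ≤ d u v) ∧ r = expv (M.τ x) h - expv (M.τ y) h }

/-- The derivation system for lower bounds on behavioural distances. -/
inductive Deriv {X L : Type*} [DecidableEq X] (M : LMC X L) : X → ℚ → X → Prop where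
  | zero (x y : X) : Deriv M x 0 y
  | lab (x y : X) : M.label x ≠ M.label y → Deriv M x 1 y
  | symm {x y : X} {ε : ℚ} : Deriv M y ε x → Deriv M x ε y
  | weak {x y : X} {ε ε' : ℚ} : Deriv M x ε' y → 0 ≤ ε → ε ≤ ε' → Deriv M x ε y
  | exp {x y : X} {ε : ℚ} (h : X → ℚ) :
      0 ≤ ε →
      (∀ z ∈ (M.τ x).supp ∪ (M.τ y).supp, 0 ≤ h z ∧ h z ≤ 1) →
      (∀ x' ∈ (M.τ x).supp ∪ (M.τ y).supp, ∀ y' ∈ (M.τ x).supp ∪ (M.τ y).supp,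
        h y' < h x' → Deriv M x' (h x' - h y') y') →
      (ε : ℝ) ≤ expv (M.τ x) (fun z => ((h z : ℚ) : ℝ))
              - expv (M.τ y) (fun z => ((h z : ℚ) : ℝ)) →
      Deriv M x ε y

/-!
By induction on `i`. The functional `Γ` maps pseudometrics to pseudometrics, and for equally
labelled `x, y` the supremum defining `Γ(d)(x, y)` is the optimal value of a finite linear
program: maximise `∑ (τ(x)(z) - τ(y)(z)) h(z)` over `h : S → [0,1]` with `h u - h v ≤ d(u, v)`,
where `S = supp τ(x) ∪ supp τ(y)`; nothing is lost by restricting to `S`, since a feasible `h`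
has a nonexpansive `[0,1]`-valued McShane extension to all of `X`.

When `d` is rational, some optimum is rational. At an optimum, the coordinates joined to an
irrational one by tight difference constraints have rational offsets from it, so none of them
sits on the boundary of the box, and the whole block can be shifted rigidly by small amounts
without leaving the feasible region. Optimality forces the block to have zero net weight, so
shifting it onto a rational value keeps the optimum and removes irrational coordinates.

A rational optimum `h` is exactly a witness for rule (exp): its premises
`x' ⊢_{h x' - h y'} y'` follow from `h x' - h y' ≤ d(x', y')` and the induction hypothesis.
-/

open Filter Topology

section Expectation

variable {X : Type*} (μ : FinDist X)

lemma FinDist.supp_nonempty : μ.supp.Nonempty :=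
  Finset.nonempty_of_sum_ne_zero (by rw [μ.sum_one]; exact one_ne_zero)

lemma FinDist.exists_ratCast_eq_expv (g : X → ℚ) : ∃ q : ℚ, (q : ℝ) = expv μ (fun z => g z) := by
  choose p hp using μ.rat
  exact ⟨∑ z ∈ μ.supp, p z * g z, by simp [expv, hp]⟩

lemma expv_eq_sum_of_supp_subset {S : Finset X} (hS : μ.supp ⊆ S) (h : X → ℝ) :
    expv μ h = ∑ z ∈ S, μ.p z * h z := by
  refine Finset.sum_subset hS fun z _ hz => ?_
  have : μ.p z = 0 := by simpa using (μ.mem_supp z).not.mp hz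
  rw [this, zero_mul]

lemma expv_nonneg {h : X → ℝ} (h0 : ∀ z, 0 ≤ h z) : 0 ≤ expv μ h :=
  Finset.sum_nonneg fun z _ => mul_nonneg (μ.nonneg z) (h0 z)

lemma expv_le_one {h : X → ℝ} (h1 : ∀ z, h z ≤ 1) : expv μ h ≤ 1 :=
  calc expv μ h ≤ ∑ z ∈ μ.supp, μ.p z * 1 :=
        Finset.sum_le_sum fun z _ => mul_le_mul_of_nonneg_left (h1 z) (μ.nonneg z)
    _ = 1 := by simp [μ.sum_one]

lemma expv_one_sub (h : X → ℝ) : expv μ (fun z => 1 - h z) = 1 - expv μ h := by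
  simp only [expv, mul_one_sub, Finset.sum_sub_distrib, μ.sum_one]

lemma expv_sub_expv_eq_sum [DecidableEq X] (μ ν : FinDist X) (h : X → ℝ) :
    expv μ h - expv ν h = ∑ z ∈ μ.supp ∪ ν.supp, (μ.p z - ν.p z) * h z := by
  rw [expv_eq_sum_of_supp_subset μ Finset.subset_union_left,
    expv_eq_sum_of_supp_subset ν Finset.subset_union_right, ← Finset.sum_sub_distrib]
  simp only [sub_mul]

end Expectation

section Gamma

variable {X L : Type*} (M : LMC X L) {d : X → X → ℝ}

def gapSet (M : LMC X L) (d : X → X → ℝ) (x y : X) : Set ℝ :=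
  {r | ∃ h : X → ℝ, (∀ z, h z ∈ Set.Icc (0 : ℝ) 1) ∧ (∀ u v, |h u - h v| ≤ d u v) ∧
    r = expv (M.τ x) h - expv (M.τ y) h}

lemma gammaFun_of_label_ne {x y : X} (hxy : M.label x ≠ M.label y) : GammaFun M d x y = 1 :=
  if_pos hxy

lemma gammaFun_of_label_eq {x y : X} (hxy : M.label x = M.label y) :
    GammaFun M d x y = sSup (gapSet M d x y) :=
  if_neg (not_not.mpr hxy)

lemma zero_mem_gapSet (hd : ∀ u v, 0 ≤ d u v) (x y : X) : 0 ∈ gapSet M d x y :=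
  ⟨fun _ => 0, fun _ => ⟨le_rfl, zero_le_one⟩, fun u v => by simpa using hd u v, by simp [expv]⟩

lemma one_mem_upperBounds_gapSet (x y : X) : 1 ∈ upperBounds (gapSet M d x y) := by
  rintro r ⟨h, hbox, -, rfl⟩
  linarith [expv_le_one (M.τ x) fun z => (hbox z).2, expv_nonneg (M.τ y) fun z => (hbox z).1]

lemma gapSet_subset_swap (x y : X) : gapSet M d x y ⊆ gapSet M d y x := by
  rintro r ⟨h, hbox, hlip, rfl⟩
  refine ⟨fun z => 1 - h z, fun z => ⟨by linarith [(hbox z).2], by linarith [(hbox z).1]⟩,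
    fun u v => by simpa [abs_sub_comm] using hlip u v, ?_⟩
  rw [expv_one_sub, expv_one_sub]
  ring

lemma gammaFun_nonneg (hd : ∀ u v, 0 ≤ d u v) (x y : X) : 0 ≤ GammaFun M d x y := by
  by_cases hxy : M.label x = M.label y
  · rw [gammaFun_of_label_eq M hxy]
    exact le_csSup ⟨1, one_mem_upperBounds_gapSet M x y⟩ (zero_mem_gapSet M hd x y)
  · rw [gammaFun_of_label_ne M hxy]
    exact zero_le_one

lemma gammaFun_le_one (hd : ∀ u v, 0 ≤ d u v) (x y : X) : GammaFun M d x y ≤ 1 := by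
  by_cases hxy : M.label x = M.label y
  · rw [gammaFun_of_label_eq M hxy]
    exact csSup_le ⟨0, zero_mem_gapSet M hd x y⟩ (one_mem_upperBounds_gapSet M x y)
  · rw [gammaFun_of_label_ne M hxy]

lemma gammaFun_self (hd : ∀ u v, 0 ≤ d u v) (x : X) : GammaFun M d x x = 0 := by
  have : gapSet M d x x = {0} := by
    refine Set.eq_singleton_iff_unique_mem.mpr ⟨zero_mem_gapSet M hd x x, ?_⟩
    rintro r ⟨h, -, -, rfl⟩
    exact sub_self _
  rw [gammaFun_of_label_eq M rfl, this, csSup_singleton]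

lemma gammaFun_comm (x y : X) : GammaFun M d x y = GammaFun M d y x := by
  by_cases hxy : M.label x = M.label y
  · rw [gammaFun_of_label_eq M hxy, gammaFun_of_label_eq M hxy.symm,
      (gapSet_subset_swap M x y).antisymm (gapSet_subset_swap M y x)]
  · rw [gammaFun_of_label_ne M hxy, gammaFun_of_label_ne M (Ne.symm hxy)]

lemma gammaFun_triangle (hd : ∀ u v, 0 ≤ d u v) (x y z : X) :
    GammaFun M d x z ≤ GammaFun M d x y + GammaFun M d y z := by
  by_cases hxy : M.label x = M.label y
  · by_cases hyz : M.label y = M.label z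
    · rw [gammaFun_of_label_eq M hxy, gammaFun_of_label_eq M hyz,
        gammaFun_of_label_eq M (hxy.trans hyz)]
      refine csSup_le ⟨0, zero_mem_gapSet M hd x z⟩ ?_
      rintro r ⟨h, hbox, hlip, rfl⟩
      have hxy' := le_csSup ⟨1, one_mem_upperBounds_gapSet M x y⟩ ⟨h, hbox, hlip, rfl⟩
      have hyz' := le_csSup ⟨1, one_mem_upperBounds_gapSet M y z⟩ ⟨h, hbox, hlip, rfl⟩
      linarith
    · rw [gammaFun_of_label_ne M hyz]
      linarith [gammaFun_le_one M hd x z, gammaFun_nonneg M hd x y]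
  · rw [gammaFun_of_label_ne M hxy]
    linarith [gammaFun_le_one M hd x z, gammaFun_nonneg M hd y z]

noncomputable def PMet.gamma (P : PMet X) : PMet X where
  d := GammaFun M P.d
  nonneg := gammaFun_nonneg M P.nonneg
  le_one := gammaFun_le_one M P.nonneg
  refl := gammaFun_self M P.nonneg
  symm := gammaFun_comm M
  triangle := gammaFun_triangle M P.nonneg

def PMet.zero : PMet X where
  d _ _ := 0
  nonneg _ _ := le_rfl
  le_one _ _ := zero_le_one
  refl _ := rfl
  symm _ _ := rfl
  triangle _ _ _ := by norm_num

lemma gammaFun_iterate_zero (n : ℕ) :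
    (GammaFun M)^[n] (fun _ _ => 0) = ((PMet.gamma M)^[n] PMet.zero).d :=
  ((Function.Semiconj.iterate_right (f := PMet.d) (fun _ => rfl) n) PMet.zero).symm

end Gamma

lemma eventually_add_mul_le {a b : ℝ} (k : ℝ) (hab : a < b) : ∀ᶠ t in 𝓝 0, a + k * t ≤ b := by
  have : Tendsto (fun t => a + k * t) (𝓝 0) (𝓝 a) :=
    (show Continuous fun t : ℝ => a + k * t by fun_prop).tendsto' 0 a (by simp)
  exact (this.eventually_lt_const hab).mono fun _ => le_of_lt

namespace KantorovichLP

variable {X : Type*} {S : Finset X} {d : X → X → ℝ} {c h : X → ℝ}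

def Feasible (S : Finset X) (d : X → X → ℝ) (h : X → ℝ) : Prop :=
  (∀ z ∈ S, h z ∈ Set.Icc (0 : ℝ) 1) ∧ ∀ u ∈ S, ∀ v ∈ S, h u - h v ≤ d u v

def IsOptimal (S : Finset X) (d : X → X → ℝ) (c h : X → ℝ) : Prop :=
  Feasible S d h ∧ ∀ g, Feasible S d g → ∑ z ∈ S, c z * g z ≤ ∑ z ∈ S, c z * h z

lemma feasible_zero (hd : ∀ u v, 0 ≤ d u v) : Feasible S d 0 :=
  ⟨fun _ _ => ⟨le_rfl, zero_le_one⟩, fun u _ v _ => by simpa using hd u v⟩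

lemma Feasible.congr {g : X → ℝ} (hh : Feasible S d h) (hg : ∀ z ∈ S, h z = g z) :
    Feasible S d g :=
  ⟨fun z hz => hg z hz ▸ hh.1 z hz, fun u hu v hv => hg u hu ▸ hg v hv ▸ hh.2 u hu v hv⟩

lemma IsOptimal.congr {g : X → ℝ} (hh : IsOptimal S d c h) (hg : ∀ z ∈ S, h z = g z) :
    IsOptimal S d c g :=
  ⟨hh.1.congr hg, fun g' hg' =>
    (hh.2 g' hg').trans_eq (Finset.sum_congr rfl fun z hz => by rw [hg z hz])⟩

lemma exists_isOptimal (hd : ∀ u v, 0 ≤ d u v) (S : Finset X) (c : X → ℝ) :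
    ∃ h, IsOptimal S d c h := by
  classical
  set K := {h : X → ℝ | Feasible S d h ∧ ∀ z ∉ S, h z = 0}
  have hK : IsCompact K := by
    refine (isCompact_univ_pi fun _ => isCompact_Icc (a := (0 : ℝ)) (b := 1)).of_isClosed_subset
      ?_ fun h hh z _ => ?_
    · simp only [K, Feasible, Set.ofPred_and, Set.ofPred_forall]
      refine (IsClosed.inter ?_ ?_).inter ?_ <;>
        refine isClosed_iInter fun u => isClosed_iInter fun _ => ?_
      · exact isClosed_Icc.preimage (continuous_apply u)
      · exact isClosed_iInter fun v => isClosed_iInter fun _ =>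
          isClosed_le (by fun_prop) (by fun_prop)
      · exact isClosed_eq (continuous_apply u) continuous_const
    · by_cases hz : z ∈ S
      · exact hh.1.1 z hz
      · simp [hh.2 z hz]
  obtain ⟨h, ⟨hfeas, -⟩, hmax⟩ :=
    hK.exists_isMaxOn ⟨0, feasible_zero hd, fun _ _ => rfl⟩
      (f := fun h => ∑ z ∈ S, c z * h z) (by fun_prop)
  refine ⟨h, hfeas, fun g hg => ?_⟩
  have hgS : ∀ z ∈ S, g z = S.piecewise g 0 z := fun z hz => (S.piecewise_eq_of_mem _ _ hz).symm
  rw [Finset.sum_congr rfl fun z hz => by rw [hgS z hz]]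
  exact hmax ⟨hg.congr hgS, fun z hz => S.piecewise_eq_of_notMem _ _ hz⟩

def Tight (d : X → X → ℝ) (h : X → ℝ) (a b : X) : Prop :=
  h a - h b = d a b ∨ h b - h a = d b a

lemma exists_rat_eq_add_of_reflTransGen (hd : ∀ a b, ∃ q : ℚ, (q : ℝ) = d a b) {u v : X}
    (huv : Relation.ReflTransGen (Tight d h) u v) : ∃ q : ℚ, h v = h u + q := by
  induction huv with
  | refl => exact ⟨0, by simp⟩
  | tail _ hbc ih =>
    obtain ⟨q, hq⟩ := ih
    rcases hbc with hbc | hbc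
    · obtain ⟨r, hr⟩ := hd _ _
      exact ⟨q - r, by push_cast; linarith⟩
    · obtain ⟨r, hr⟩ := hd _ _
      exact ⟨q + r, by push_cast; linarith⟩

open Classical in
noncomputable def tightComponent (S : Finset X) (d : X → X → ℝ) (h : X → ℝ) (u : X) :
    Finset X :=
  S.filter (Relation.ReflTransGen (Tight d h) u)

open Classical in
lemma mem_tightComponent {u z : X} :
    z ∈ tightComponent S d h u ↔ z ∈ S ∧ Relation.ReflTransGen (Tight d h) u z :=
  Finset.mem_filter

lemma Feasible.exists_nonexpansive_extension (P : PMet X) (hS : S.Nonempty)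
    (hh : Feasible S P.d h) :
    ∃ H : X → ℝ, (∀ z, H z ∈ Set.Icc (0 : ℝ) 1) ∧ (∀ u v, |H u - H v| ≤ P.d u v) ∧
      ∀ z ∈ S, H z = h z := by
  set F : X → ℝ := fun z => S.inf' hS fun s => h s + P.d s z
  have hF_nonneg (z) : 0 ≤ F z := by
    obtain ⟨s, hs, hFs⟩ := S.exists_mem_eq_inf' hS fun s => h s + P.d s z
    simp only [F, hFs]
    exact add_nonneg (hh.1 s hs).1 (P.nonneg s z)
  have hF_sub (u v) : F u - F v ≤ P.d u v := by
    obtain ⟨s, hs, hFs⟩ := S.exists_mem_eq_inf' hS fun s => h s + P.d s v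
    have hFu : F u ≤ h s + P.d s u := S.inf'_le _ hs
    linarith [P.triangle s v u, P.symm v u]
  have hF_eq (z) (hz : z ∈ S) : F z = h z := by
    refine le_antisymm ?_ (S.le_inf' hS _ fun s hs => ?_)
    · simpa [P.refl] using S.inf'_le (fun s => h s + P.d s z) hz
    · linarith [hh.2 z hz s hs, P.symm z s]
  refine ⟨fun z => min 1 (F z), fun z => ⟨le_min zero_le_one (hF_nonneg z), min_le_left _ _⟩,
    fun u v => ?_, fun z hz => by simp [hF_eq z hz, (hh.1 z hz).2]⟩
  calc |min 1 (F u) - min 1 (F v)| ≤ max |1 - 1| |F u - F v| := abs_min_sub_min_le_max _ _ _ _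
    _ = |F u - F v| := by simp
    _ ≤ P.d u v := abs_sub_le_iff.2 ⟨hF_sub u v, P.symm u v ▸ hF_sub v u⟩

variable [DecidableEq X]

def shift (C : Finset X) (h : X → ℝ) (t : ℝ) : X → ℝ :=
  fun z => h z + if z ∈ C then t else 0

lemma sum_mul_shift {C : Finset X} (hC : C ⊆ S) (t : ℝ) :
    ∑ z ∈ S, c z * shift C h t z = ∑ z ∈ S, c z * h z + t * ∑ z ∈ C, c z := by
  simp only [shift, mul_add, Finset.sum_add_distrib, mul_ite, mul_zero, Finset.sum_ite_mem,
    Finset.inter_eq_right.mpr hC, Finset.mul_sum, mul_comm]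

lemma eventually_feasible_shift {C : Finset X} (hh : Feasible S d h)
    (hbox : ∀ z ∈ C, h z ∈ Set.Ioo 0 1)
    (hclosed : ∀ a ∈ S, ∀ b ∈ S, Tight d h a b → (a ∈ C ↔ b ∈ C)) :
    ∀ᶠ t in 𝓝 0, Feasible S d (shift C h t) := by
  refine ((eventually_all_finset S).2 fun z hz => ?_).and
    ((eventually_all_finset S).2 fun a ha => (eventually_all_finset S).2 fun b hb => ?_)
  · by_cases hzC : z ∈ C
    · filter_upwards [eventually_add_mul_le (-1) (neg_lt_zero.2 (hbox z hzC).1),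
        eventually_add_mul_le 1 (hbox z hzC).2] with t h0 h1
      simp only [shift, hzC, if_true]
      constructor <;> linarith
    · exact Eventually.of_forall fun _ => by simpa [shift, hzC] using hh.1 z hz
  · have hslack (hab : a ∈ C ↔ b ∉ C) : h a - h b < d a b :=
      (hh.2 a ha b hb).lt_of_ne fun he => by simpa [hab] using hclosed a ha b hb (Or.inl he)
    by_cases haC : a ∈ C <;> by_cases hbC : b ∈ C <;> simp only [shift, haC, hbC, if_true, if_false]
    · exact Eventually.of_forall fun _ => by linarith [hh.2 a ha b hb]
    · filter_upwards [eventually_add_mul_le 1 (hslack (by simp [haC, hbC]))] with t ht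
      linarith
    · filter_upwards [eventually_add_mul_le (-1) (hslack (by simp [haC, hbC]))] with t ht
      linarith
    · exact Eventually.of_forall fun _ => by linarith [hh.2 a ha b hb]

lemma IsOptimal.exists_fewer_irrational (hd : ∀ a b, ∃ q : ℚ, (q : ℝ) = d a b)
    (hopt : IsOptimal S d c h) {u : X} (hu : u ∈ S) (hirr : Irrational (h u)) :
    ∃ h', IsOptimal S d c h' ∧ (∀ z ∈ S, Irrational (h' z) → Irrational (h z)) ∧
      ¬ Irrational (h' u) := by
  set C := tightComponent S d h u
  have hCS : C ⊆ S := fun z hz => (mem_tightComponent.1 hz).1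
  have hdiff (z) (hz : z ∈ C) : ∃ q : ℚ, h z = h u + q :=
    exists_rat_eq_add_of_reflTransGen hd (mem_tightComponent.1 hz).2
  have hbox (z) (hz : z ∈ C) : h z ∈ Set.Ioo 0 1 := by
    obtain ⟨q, hq⟩ := hdiff z hz
    have hz' : Irrational (h z) := hq ▸ hirr.add_ratCast q
    exact ⟨(hopt.1.1 z (hCS hz)).1.lt_of_ne hz'.ne_zero.symm,
      (hopt.1.1 z (hCS hz)).2.lt_of_ne hz'.ne_one⟩
  have hclosed : ∀ a ∈ S, ∀ b ∈ S, Tight d h a b → (a ∈ C ↔ b ∈ C) := fun a ha b hb hab =>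
    ⟨fun haC => mem_tightComponent.2 ⟨hb, (mem_tightComponent.1 haC).2.tail hab⟩,
      fun hbC => mem_tightComponent.2 ⟨ha, (mem_tightComponent.1 hbC).2.tail hab.symm⟩⟩
  have hev := eventually_feasible_shift hopt.1 hbox hclosed
  have hweight : ∑ z ∈ C, c z = 0 := by
    refine IsLocalMax.hasDerivAt_eq_zero
      (f := fun t => ∑ z ∈ S, c z * h z + t * ∑ z ∈ C, c z) (a := 0) ?_ ?_
    · exact hev.mono fun t ht => by simpa [sum_mul_shift hCS] using hopt.2 _ ht
    · simpa using ((hasDerivAt_id (0 : ℝ)).mul_const (∑ z ∈ C, c z)).const_add (∑ z ∈ S, c z * h z)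
  obtain ⟨q, hq⟩ : ∃ q : ℚ, Feasible S d (shift C h (q - h u)) :=
    Rat.denseRange_cast.mem_nhds ((tendsto_sub_nhds_zero_iff.2 tendsto_id).eventually hev)
  refine ⟨shift C h (q - h u), ⟨hq, fun g hg => ?_⟩, fun z hz hz' => ?_, ?_⟩
  · rw [sum_mul_shift hCS, hweight, mul_zero, add_zero]
    exact hopt.2 g hg
  · by_cases hzC : z ∈ C
    · obtain ⟨r, hr⟩ := hdiff z hzC
      have hrat : shift C h (q - h u) z = ((r + q : ℚ) : ℝ) := by
        simp only [shift, hzC, if_true, hr]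
        push_cast
        ring
      exact absurd hz' (hrat ▸ Rat.not_irrational _)
    · simpa [shift, hzC] using hz'
  · have huC : u ∈ C := mem_tightComponent.2 ⟨hu, Relation.ReflTransGen.refl⟩
    have hrat : shift C h (q - h u) u = q := by simp [shift, huC]
    rw [hrat]
    exact Rat.not_irrational q

lemma IsOptimal.exists_ratCast (hd : ∀ a b, ∃ q : ℚ, (q : ℝ) = d a b)
    (hopt : IsOptimal S d c h) : ∃ g : X → ℚ, IsOptimal S d c (fun z => g z) := by
  classical
  induction hn : (S.filter fun z => Irrational (h z)).card using Nat.strong_induction_on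
    generalizing h with
  | _ n ih =>
  by_cases hirr : ∃ u ∈ S, Irrational (h u)
  · obtain ⟨u, hu, hirr⟩ := hirr
    obtain ⟨h', hopt', hsub, hu'⟩ := hopt.exists_fewer_irrational hd hu hirr
    refine ih _ (hn ▸ Finset.card_lt_card ?_) hopt' rfl
    refine (Finset.ssubset_iff_of_subset fun z hz => ?_).2
      ⟨u, Finset.mem_filter.2 ⟨hu, hirr⟩, fun hu'' => hu' (Finset.mem_filter.1 hu'').2⟩
    obtain ⟨hzS, hz⟩ := Finset.mem_filter.1 hz
    exact Finset.mem_filter.2 ⟨hzS, hsub z hzS hz⟩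
  · push Not at hirr
    choose! g hg using fun z hz => by simpa [Irrational] using hirr z hz
    exact ⟨g, hopt.congr fun z hz => (hg z hz).symm⟩

end KantorovichLP

open KantorovichLP

section Step

variable {X L : Type*} [DecidableEq X] (M : LMC X L) (P : PMet X)

def IsOptimalFor (x y : X) (h : X → ℝ) : Prop :=
  IsOptimal ((M.τ x).supp ∪ (M.τ y).supp) P.d (fun z => (M.τ x).p z - (M.τ y).p z) h

lemma gammaFun_eq_of_isOptimalFor {x y : X} (hxy : M.label x = M.label y) {h : X → ℝ}
    (hopt : IsOptimalFor M P x y h) :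
    GammaFun M P.d x y = expv (M.τ x) h - expv (M.τ y) h := by
  rw [gammaFun_of_label_eq M hxy]
  refine IsGreatest.csSup_eq ⟨?_, ?_⟩
  · obtain ⟨H, hbox, hlip, hH⟩ := hopt.1.exists_nonexpansive_extension P
      ((M.τ x).supp_nonempty.mono Finset.subset_union_left)
    refine ⟨H, hbox, hlip, ?_⟩
    rw [expv_sub_expv_eq_sum, expv_sub_expv_eq_sum]
    exact Finset.sum_congr rfl fun z hz => by rw [hH z hz]
  · rintro r ⟨g, hbox, hlip, rfl⟩
    rw [expv_sub_expv_eq_sum, expv_sub_expv_eq_sum]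
    exact hopt.2 g ⟨fun z _ => hbox z, fun u _ v _ => (le_abs_self _).trans (hlip u v)⟩

lemma deriv_of_isOptimalFor (hP : ∀ u v, ∃ q : ℚ, (q : ℝ) = P.d u v ∧ Deriv M u q v)
    {x y : X} {g : X → ℚ} (hopt : IsOptimalFor M P x y fun z => g z) {ε : ℚ}
    (hε : (ε : ℝ) = expv (M.τ x) (fun z => g z) - expv (M.τ y) (fun z => g z)) :
    Deriv M x ε y := by
  have hε_nonneg : (0 : ℝ) ≤ ε := by
    simpa [hε, expv_sub_expv_eq_sum] using hopt.2 0 (feasible_zero P.nonneg)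
  refine Deriv.exp g (by exact_mod_cast hε_nonneg) (fun z hz => ?_)
    (fun x' hx' y' hy' hlt => ?_) hε.le
  · have : (0 : ℝ) ≤ g z ∧ (g z : ℝ) ≤ 1 := hopt.1.1 z hz
    exact_mod_cast this
  · obtain ⟨q, hq, hD⟩ := hP x' y'
    refine hD.weak (sub_nonneg.2 hlt.le) ?_
    have : (g x' : ℝ) - g y' ≤ q := hq ▸ hopt.1.2 x' hx' y' hy'
    exact_mod_cast this

theorem exists_ratCast_eq_gammaFun_and_deriv
    (hP : ∀ u v, ∃ q : ℚ, (q : ℝ) = P.d u v ∧ Deriv M u q v) (x y : X) :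
    ∃ q : ℚ, (q : ℝ) = GammaFun M P.d x y ∧ Deriv M x q y := by
  by_cases hxy : M.label x = M.label y
  · obtain ⟨h, hopt⟩ := exists_isOptimal P.nonneg ((M.τ x).supp ∪ (M.τ y).supp)
      fun z => (M.τ x).p z - (M.τ y).p z
    obtain ⟨g, hopt⟩ := hopt.exists_ratCast fun u v => (hP u v).imp fun _ => And.left
    obtain ⟨qx, hqx⟩ := (M.τ x).exists_ratCast_eq_expv g
    obtain ⟨qy, hqy⟩ := (M.τ y).exists_ratCast_eq_expv g
    have hq : ((qx - qy : ℚ) : ℝ) = expv (M.τ x) (fun z => g z) - expv (M.τ y) (fun z => g z) := by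
      rw [Rat.cast_sub, hqx, hqy]
    exact ⟨qx - qy, hq.trans (gammaFun_eq_of_isOptimalFor M P hxy hopt).symm,
      deriv_of_isOptimalFor M P hP hopt hq⟩
  · exact ⟨1, by rw [gammaFun_of_label_ne M hxy, Rat.cast_one], Deriv.lab x y hxy⟩

end Step

theorem nstep_derivable_general {X L : Type*} [DecidableEq X] (M : LMC X L)
    (i : ℕ) (x y : X) :
    ∃ q : ℚ, (q : ℝ) = (GammaFun M)^[i] (fun _ _ => 0) x y ∧ Deriv M x q y := by
  induction i generalizing x y with
  | zero => exact ⟨0, by simp, Deriv.zero x y⟩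
  | succ n ih =>
    rw [gammaFun_iterate_zero] at ih ⊢
    rw [Function.iterate_succ_apply']
    exact exists_ratCast_eq_gammaFun_and_deriv M _ ih x y

/-- Each finite approximant `Γ^i(⊥)(x,y)` is rational and derivable. -/
theorem nstep_derivable {X L : Type*} [DecidableEq X] [Nonempty L] (M : LMC X L)
    (i : ℕ) (x y : X) :
    ∃ q : ℚ, (q : ℝ) = (GammaFun M)^[i] (fun _ _ => 0) x y ∧ Deriv M x q y :=
  nstep_derivable_general M i x y
end

section
/- For any labelled Markov chain (X,L,τ,l), any rational ε ∈ [0,1], and any states x,y ∈ X, if the judgment x ⊢_ε y is derivable in the derivation system, then there exists a formula φ of the logic L such that ⟦φ⟧(x) = ε and ⟦φ⟧(y) = 0. -/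
/-- Formulas of the logic `𝓛`. -/
inductive Formula (L : Type*) where
  | atom : L → Formula L
  | next : Formula L → Formula L
  | neg : Formula L → Formula L
  | sub : Formula L → {q : ℚ // 0 ≤ q ∧ q ≤ 1} → Formula L
  | or : Formula L → Formula L → Formula L

/-- Quantitative semantics of the logic. -/
noncomputable def interp {X L : Type*} [DecidableEq L] (M : LMC X L) : Formula L → X → ℝ
  | .atom a, x => if M.label x = a then 1 else 0
  | .next φ, x => expv (M.τ x) (interp M φ)
  | .neg φ, x => 1 - interp M φ x
  | .sub φ q, x => max 0 (interp M φ x - (q.1 : ℝ))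
  | .or φ ψ, x => max (interp M φ x) (interp M ψ x)

/-!
Induction on the derivation. Constants are definable (`¬((¬(a ⊖ 1)) ⊖ c)` has value `c`
everywhere), so are `min` (De Morgan) and truncated addition of a constant (`¬(¬φ ⊖ c)`), and
each rule other than (exp) is matched by one of these connectives. For (exp), the inductive
hypotheses give, for successors `a`, `b` with `h b < h a`, a formula with value `h a` at `a`
and `h b` at `b`; a max over `a` of mins over `b` of these formulas agrees with `h` on all
successors, and `○` of it, minus the constant `τ(y) ⊨ h`, is `τ(x) ⊨ h - τ(y) ⊨ h ≥ ε` at `x`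
and `0` at `y`.
-/

open Finset

section Expectation

variable {X : Type*}

lemma expv_nonneg_s12 (μ : FinDist X) {f : X → ℝ} (hf : ∀ z ∈ μ.supp, 0 ≤ f z) : 0 ≤ expv μ f :=
  sum_nonneg fun z hz => mul_nonneg (μ.nonneg z) (hf z hz)

lemma expv_le_one_s12 (μ : FinDist X) {f : X → ℝ} (hf : ∀ z ∈ μ.supp, f z ≤ 1) : expv μ f ≤ 1 :=
  calc expv μ f ≤ ∑ z ∈ μ.supp, μ.p z * 1 :=
        sum_le_sum fun z hz => mul_le_mul_of_nonneg_left (hf z hz) (μ.nonneg z)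
    _ = 1 := by simp only [mul_one, μ.sum_one]

lemma expv_congr (μ : FinDist X) {f g : X → ℝ} (h : ∀ z ∈ μ.supp, f z = g z) :
    expv μ f = expv μ g :=
  sum_congr rfl fun z hz => by rw [h z hz]

lemma exists_rat_eq_expv (μ : FinDist X) (h : X → ℚ) :
    ∃ r : ℚ, (r : ℝ) = expv μ (fun z => (h z : ℝ)) := by
  choose p hp using μ.rat
  exact ⟨∑ z ∈ μ.supp, p z * h z, by push_cast [expv, hp]; rfl⟩

end Expectation

namespace Formula

variable {L : Type*}

noncomputable def const [Nonempty L] (c : {q : ℚ // 0 ≤ q ∧ q ≤ 1}) : Formula L :=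
  neg (sub (neg (sub (atom (Classical.arbitrary L)) ⟨1, zero_le_one, le_rfl⟩)) c)

def and (φ ψ : Formula L) : Formula L :=
  neg (or (neg φ) (neg ψ))

def addConst (φ : Formula L) (c : {q : ℚ // 0 ≤ q ∧ q ≤ 1}) : Formula L :=
  neg (sub (neg φ) c)

end Formula

section Semantics

variable {X L : Type*} [DecidableEq L] (M : LMC X L)

open Formula

lemma interp_mem_Icc (φ : Formula L) (z : X) : interp M φ z ∈ Set.Icc (0 : ℝ) 1 := by
  induction φ generalizing z with
  | atom a => unfold interp; split_ifs <;> simp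
  | next φ ih => exact ⟨expv_nonneg_s12 _ fun w _ => (ih w).1, expv_le_one_s12 _ fun w _ => (ih w).2⟩
  | neg φ ih =>
    simp only [interp, Set.mem_Icc, sub_nonneg, sub_le_self_iff]
    exact (ih z).symm
  | sub φ q ih =>
    have hq : (0 : ℝ) ≤ q.1 := by exact_mod_cast q.2.1
    exact ⟨le_max_left _ _, max_le zero_le_one (by linarith [(ih z).2])⟩
  | or φ ψ ihφ ihψ => exact ⟨le_max_of_le_left (ihφ z).1, max_le (ihφ z).2 (ihψ z).2⟩

@[simp]
lemma interp_const [Nonempty L] (c : {q : ℚ // 0 ≤ q ∧ q ≤ 1}) (z : X) :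
    interp M (const c) z = c.1 := by
  set a : Formula L := atom (Classical.arbitrary L)
  have hc : (c.1 : ℝ) ≤ 1 := by exact_mod_cast c.2.2
  have ha : max 0 (interp M a z - 1) = 0 := max_eq_left (by linarith [(interp_mem_Icc M a z).2])
  change 1 - max 0 (1 - max 0 (interp M a z - (1 : ℚ)) - c.1) = c.1
  rw [Rat.cast_one, ha, sub_zero, max_eq_right (sub_nonneg.2 hc), sub_sub_cancel]

@[simp]
lemma interp_and (φ ψ : Formula L) (z : X) :
    interp M (φ.and ψ) z = min (interp M φ z) (interp M ψ z) := by
  simp only [Formula.and, interp, max_sub_sub_left, sub_sub_cancel]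

@[simp]
lemma interp_addConst (φ : Formula L) (c : {q : ℚ // 0 ≤ q ∧ q ≤ 1}) (z : X) :
    interp M (φ.addConst c) z = min 1 (interp M φ z + c.1) := by
  simp only [Formula.addConst, interp]
  rcases le_total (1 - interp M φ z - c.1) 0 with h | h
  · rw [max_eq_left h, min_eq_left (by linarith), sub_zero]
  · rw [max_eq_right h, min_eq_right (by linarith)]
    ring

end Semantics

section Separation

variable {X L : Type*} [DecidableEq L] (M : LMC X L)

open Formula

def Separates (x : X) (ε : ℚ) (y : X) : Prop :=
  ∃ φ : Formula L, interp M φ x = ε ∧ interp M φ y = 0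

variable {M}

namespace Separates

lemma zero [Nonempty L] (x y : X) : Separates M x 0 y :=
  ⟨const ⟨0, le_rfl, zero_le_one⟩, by simp, by simp⟩

lemma of_label_ne {x y : X} (hne : M.label x ≠ M.label y) : Separates M x 1 y :=
  ⟨atom (M.label x), by simp [interp], by simp [interp, hne.symm]⟩

lemma mem_Icc {x y : X} {ε : ℚ} (h : Separates M x ε y) : ε ∈ Set.Icc 0 1 := by
  obtain ⟨φ, hx, -⟩ := h
  have h01 := interp_mem_Icc M φ x
  rw [hx] at h01
  exact ⟨by exact_mod_cast h01.1, by exact_mod_cast h01.2⟩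

lemma symm {x y : X} {ε : ℚ} (h : Separates M y ε x) : Separates M x ε y := by
  obtain ⟨hε0, hε1⟩ := h.mem_Icc
  obtain ⟨φ, hy, hx⟩ := h
  refine ⟨sub (neg φ) ⟨1 - ε, sub_nonneg.2 hε1, sub_le_self 1 hε0⟩, ?_, ?_⟩
  · simp only [interp, hx, Rat.cast_sub, Rat.cast_one, sub_zero, sub_sub_cancel]
    exact max_eq_right (by exact_mod_cast hε0)
  · simp only [interp, hy, Rat.cast_sub, Rat.cast_one, sub_self, max_self]

lemma of_le_interp [Nonempty L] {x y : X} {ε : ℚ} {φ : Formula L} (hε : 0 ≤ ε)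
    (hx : (ε : ℝ) ≤ interp M φ x) (hy : interp M φ y = 0) : Separates M x ε y := by
  have hε1 : ε ≤ 1 := by exact_mod_cast hx.trans (interp_mem_Icc M φ x).2
  refine ⟨φ.and (const ⟨ε, hε, hε1⟩), ?_, ?_⟩
  · rw [interp_and, interp_const, min_eq_right hx]
  · rw [interp_and, interp_const, hy, min_eq_left (by exact_mod_cast hε)]

lemma mono [Nonempty L] {x y : X} {ε ε' : ℚ} (h : Separates M x ε' y) (hε : 0 ≤ ε)
    (hle : ε ≤ ε') : Separates M x ε y :=
  let ⟨_, hx, hy⟩ := h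
  of_le_interp hε (hx ▸ Rat.cast_le.2 hle) hy

end Separates

section Approximation

variable [DecidableEq X] [Nonempty L] {S : Finset X} {h : X → ℚ}

lemma exists_formula_eq_at_le_on (hbnd : ∀ z ∈ S, 0 ≤ h z ∧ h z ≤ 1)
    (hsep : ∀ a ∈ S, ∀ b ∈ S, h b < h a → Separates M a (h a - h b) b) {a : X} (ha : a ∈ S) :
    ∃ ψ : Formula L, interp M ψ a = h a ∧ ∀ z ∈ S, interp M ψ z ≤ h z := by
  -- The cap `ψ ≤ h a` takes care of the successors `b` with `h a ≤ h b`.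
  suffices ∀ T ⊆ S, ∃ ψ : Formula L, interp M ψ a = h a ∧ (∀ z, interp M ψ z ≤ h a) ∧
      ∀ z ∈ T, interp M ψ z ≤ h z from
    let ⟨ψ, hψa, _, hψS⟩ := this S subset_rfl
    ⟨ψ, hψa, hψS⟩
  intro T hT
  induction T using Finset.induction_on with
  | empty => exact ⟨const ⟨h a, hbnd a ha⟩, by simp, fun z => by simp, by simp⟩
  | insert b T _ ih =>
    obtain ⟨ψ, hψa, hψle, hψT⟩ := ih ((subset_insert b T).trans hT)
    have hb : b ∈ S := hT (mem_insert_self b T)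
    by_cases hlt : h b < h a
    · obtain ⟨φ, hφa, hφb⟩ := hsep a ha b hb hlt
      refine ⟨ψ.and (φ.addConst ⟨h b, hbnd b hb⟩), ?_, fun z => ?_, ?_⟩
      · have ha1 : (h a : ℝ) ≤ 1 := by exact_mod_cast (hbnd a ha).2
        simp only [interp_and, interp_addConst, hψa, hφa, Rat.cast_sub, sub_add_cancel,
          min_eq_right ha1, min_self]
      · exact (interp_and M ψ _ z).trans_le ((min_le_left _ _).trans (hψle z))
      · simp only [mem_insert, forall_eq_or_imp, interp_and]
        refine ⟨(min_le_right _ _).trans ?_, fun z hz => (min_le_left _ _).trans (hψT z hz)⟩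
        rw [interp_addConst, hφb, zero_add]
        exact min_le_right _ _
    · simp only [mem_insert, forall_eq_or_imp]
      exact ⟨ψ, hψa, hψle, (hψle b).trans (by exact_mod_cast not_lt.1 hlt), hψT⟩

lemma exists_formula_eqOn (hbnd : ∀ z ∈ S, 0 ≤ h z ∧ h z ≤ 1)
    (hsep : ∀ a ∈ S, ∀ b ∈ S, h b < h a → Separates M a (h a - h b) b) :
    ∃ ψ : Formula L, ∀ z ∈ S, interp M ψ z = h z := by
  suffices ∀ T ⊆ S, ∃ ψ : Formula L, (∀ z ∈ S, interp M ψ z ≤ h z) ∧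
      ∀ z ∈ T, interp M ψ z = h z from
    (this S subset_rfl).imp fun _ hψ => hψ.2
  intro T hT
  induction T using Finset.induction_on with
  | empty =>
    exact ⟨const ⟨0, le_rfl, zero_le_one⟩, fun z hz => by simpa using (hbnd z hz).1, by simp⟩
  | insert a T _ ih =>
    obtain ⟨ψ, hψS, hψT⟩ := ih ((subset_insert a T).trans hT)
    have ha : a ∈ S := hT (mem_insert_self a T)
    obtain ⟨χ, hχa, hχS⟩ := exists_formula_eq_at_le_on hbnd hsep ha
    refine ⟨ψ.or χ, fun z hz => max_le (hψS z hz) (hχS z hz), ?_⟩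
    simp only [mem_insert, forall_eq_or_imp]
    refine ⟨le_antisymm (max_le (hψS a ha) (hχS a ha)) (hχa ▸ le_max_right _ _),
      fun z hz => le_antisymm (max_le (hψS z (hT (mem_insert_of_mem hz))) ?_)
        (hψT z hz ▸ le_max_left _ _)⟩
    exact hχS z (hT (mem_insert_of_mem hz))

end Approximation

lemma Separates.of_expv_sub_expv [DecidableEq X] [Nonempty L] {x y : X} {ε : ℚ} (h : X → ℚ)
    (hε : 0 ≤ ε) (hbnd : ∀ z ∈ (M.τ x).supp ∪ (M.τ y).supp, 0 ≤ h z ∧ h z ≤ 1)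
    (hsep : ∀ a ∈ (M.τ x).supp ∪ (M.τ y).supp, ∀ b ∈ (M.τ x).supp ∪ (M.τ y).supp,
      h b < h a → Separates M a (h a - h b) b)
    (hexp : (ε : ℝ) ≤ expv (M.τ x) (fun z => (h z : ℝ)) - expv (M.τ y) (fun z => (h z : ℝ))) :
    Separates M x ε y := by
  obtain ⟨ψ, hψ⟩ := exists_formula_eqOn hbnd hsep
  have hψx : expv (M.τ x) (interp M ψ) = expv (M.τ x) (fun z => (h z : ℝ)) :=
    expv_congr _ fun z hz => hψ z (mem_union_left _ hz)
  have hψy : expv (M.τ y) (interp M ψ) = expv (M.τ y) (fun z => (h z : ℝ)) :=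
    expv_congr _ fun z hz => hψ z (mem_union_right _ hz)
  obtain ⟨q, hq⟩ := exists_rat_eq_expv (M.τ y) h
  have hq01 : 0 ≤ q ∧ q ≤ 1 := by
    have h01 := interp_mem_Icc M (next ψ) y
    rw [interp, hψy, ← hq] at h01
    exact ⟨by exact_mod_cast h01.1, by exact_mod_cast h01.2⟩
  refine Separates.of_le_interp (φ := sub (next ψ) ⟨q, hq01⟩) hε ?_ ?_
  · simp only [interp, hψx, hq]
    exact le_max_of_le_right hexp
  · simp only [interp, hψy, hq, sub_self, max_self]

theorem Deriv.separates [DecidableEq X] [Nonempty L] {x y : X} {ε : ℚ} (hd : Deriv M x ε y) :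
    Separates M x ε y := by
  induction hd with
  | zero x y => exact .zero x y
  | lab x y hne => exact .of_label_ne hne
  | symm _ ih => exact ih.symm
  | weak _ hε hle ih => exact ih.mono hε hle
  | exp h hε hbnd _ hexp ih => exact .of_expv_sub_expv h hε hbnd ih hexp

end Separation

theorem proof_to_formula_general {X L : Type*} [DecidableEq X] [DecidableEq L]
    (M : LMC X L) (ε : ℚ) (x y : X)
    (hder : Deriv M x ε y) :
    ∃ φ : Formula L, interp M φ x = (ε : ℝ) ∧ interp M φ y = 0 :=
  have : Nonempty L := ⟨M.label x⟩
  hder.separates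

/-- From every derivation a formula witnessing the same bound can be constructed. -/
theorem proof_to_formula {X L : Type*} [DecidableEq X] [DecidableEq L] [Nonempty L]
    (M : LMC X L) (ε : ℚ) (hε0 : 0 ≤ ε) (hε1 : ε ≤ 1) (x y : X)
    (hder : Deriv M x ε y) :
    ∃ φ : Formula L, interp M φ x = (ε : ℝ) ∧ interp M φ y = 0 :=
  proof_to_formula_general M ε x y hder
end
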